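/- arXiv:1510.03724 — 5 statements merged into one kernel-verified Lean document; each statement's English description precedes it below -/
import Mathlib

section
/- For every smooth u: ℝ² → ℝ with coordinates (x,y), setting φ := u_xxx + (1/2)u_x³ (a smooth function on ℝ²), M := (1/2)φ·u_x − (1/8)u_x⁴ + (1/2)u_xx², and N := (1/2)φ·u_y − (1/2)u_x²·cos u − u_xx·(u_xy − sin u), the identity (1/2)u_y·∂_xφ + (1/2)u_x·∂_yφ + φ·sin u = ∂_x N + ∂_y M holds identically on ℝ². (That is, the prolonged generalized vector field φ·∂/∂u applied to the sine-Gordon Lagrangian L = (1/2)u_x u_y − cos u is a total divergence, so φ·∂/∂u is a variational symmetry of the sine-Gordon equation.) -/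
noncomputable section

/-- The partial derivative of `f : ℝ^N → ℝ` in the `i`-th coordinate direction. -/
def pd {N : ℕ} (i : Fin N) (f : (Fin N → ℝ) → ℝ) : (Fin N → ℝ) → ℝ :=
  fun t => fderiv ℝ f t (Pi.single i 1)

namespace PdAux

variable {N : ℕ} {i j : Fin N} {f g : (Fin N → ℝ) → ℝ} {t : Fin N → ℝ}

lemma contDiff_pd (i : Fin N) (hf : ContDiff ℝ (⊤ : ℕ∞) f) : ContDiff ℝ (⊤ : ℕ∞) (pd i f) :=
  (hf.fderiv_right (by simp)).clm_apply contDiff_const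

lemma pd_add (hf : DifferentiableAt ℝ f t) (hg : DifferentiableAt ℝ g t) :
    pd i (fun s => f s + g s) t = pd i f t + pd i g t := by
  simp [pd, fderiv_fun_add hf hg]

lemma pd_sub (hf : DifferentiableAt ℝ f t) (hg : DifferentiableAt ℝ g t) :
    pd i (fun s => f s - g s) t = pd i f t - pd i g t := by
  simp [pd, fderiv_fun_sub hf hg]

lemma pd_mul (hf : DifferentiableAt ℝ f t) (hg : DifferentiableAt ℝ g t) :
    pd i (fun s => f s * g s) t = pd i f t * g t + f t * pd i g t := by
  simp [pd, fderiv_fun_mul hf hg]; ring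

lemma pd_const_mul (c : ℝ) (hf : DifferentiableAt ℝ f t) :
    pd i (fun s => c * f s) t = c * pd i f t := by
  simp [pd, fderiv_const_mul hf c]

lemma pd_pow (n : ℕ) (hf : DifferentiableAt ℝ f t) :
    pd i (fun s => f s ^ n) t = n * f t ^ (n - 1) * pd i f t := by
  have h : HasFDerivAt (fun s => f s ^ n) ((n * f t ^ (n-1)) • fderiv ℝ f t) t :=
    (hasDerivAt_pow n (f t)).comp_hasFDerivAt t hf.hasFDerivAt
  simp [pd, h.fderiv]

lemma pd_cos (hf : DifferentiableAt ℝ f t) :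
    pd i (fun s => Real.cos (f s)) t = -Real.sin (f t) * pd i f t := by
  have h : HasFDerivAt (fun s => Real.cos (f s)) ((-Real.sin (f t)) • fderiv ℝ f t) t :=
    (Real.hasDerivAt_cos (f t)).comp_hasFDerivAt t hf.hasFDerivAt
  simp [pd, h.fderiv]

lemma pd_sin (hf : DifferentiableAt ℝ f t) :
    pd i (fun s => Real.sin (f s)) t = Real.cos (f t) * pd i f t := by
  have h : HasFDerivAt (fun s => Real.sin (f s)) ((Real.cos (f t)) • fderiv ℝ f t) t :=
    (Real.hasDerivAt_sin (f t)).comp_hasFDerivAt t hf.hasFDerivAt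
  simp [pd, h.fderiv]

lemma pd_comm (hf : ContDiff ℝ (⊤ : ℕ∞) f) (i j : Fin N) (t : Fin N → ℝ) :
    pd i (pd j f) t = pd j (pd i f) t := by
  have hd : ContDiff ℝ (⊤ : ℕ∞) (fderiv ℝ f) := hf.fderiv_right (by simp)
  have h1 : ∀ (k : Fin N) (s : Fin N → ℝ),
      fderiv ℝ (pd k f) s = (fderiv ℝ (fderiv ℝ f) s).flip (Pi.single k 1) := by
    intro k s
    have := fderiv_clm_apply (c := fderiv ℝ f) (u := fun _ => Pi.single k (1:ℝ))
      (hd.differentiable (by simp) s) (differentiableAt_const _)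
    rw [show pd k f = fun y => fderiv ℝ f y (Pi.single k 1) from rfl]
    simpa using this
  have hsym := (hf.contDiffAt (x := t)).isSymmSndFDerivAt (by
    rw [minSmoothness_of_isRCLikeNormedField]; exact WithTop.coe_le_coe.2 (le_top : (2 : ℕ∞) ≤ ⊤))
  simp only [pd, h1]
  exact hsym _ _

end PdAux

open PdAux

/-- for smooth `u : ℝ² → ℝ` (coordinates `x = 0`, `y = 1`), with
`φ := u_xxx + ½u_x³`, `M := ½φ·u_x − ⅛u_x⁴ + ½u_xx²` and
`N := ½φ·u_y − ½u_x²·cos u − u_xx·(u_xy − sin u)`, the identity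
`½u_y·∂_xφ + ½u_x·∂_yφ + φ·sin u = ∂_x N + ∂_y M` holds identically on `ℝ²`;
that is, `φ·∂/∂u` is a variational symmetry of the sine-Gordon equation. -/
theorem stmt_4 (u : (Fin 2 → ℝ) → ℝ) (hu : ContDiff ℝ (⊤ : ℕ∞) u) :
    let ux := pd 0 u
    let uy := pd 1 u
    let uxx := pd 0 ux
    let uxy := pd 1 ux
    let uxxx := pd 0 uxx
    let φ : (Fin 2 → ℝ) → ℝ := fun t => uxxx t + (1 / 2) * (ux t) ^ 3
    let M : (Fin 2 → ℝ) → ℝ := fun t =>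
      (1 / 2) * φ t * ux t - (1 / 8) * (ux t) ^ 4 + (1 / 2) * (uxx t) ^ 2
    let Nf : (Fin 2 → ℝ) → ℝ := fun t =>
      (1 / 2) * φ t * uy t - (1 / 2) * (ux t) ^ 2 * Real.cos (u t)
        - uxx t * (uxy t - Real.sin (u t))
    ∀ t : Fin 2 → ℝ,
      (1 / 2) * uy t * pd 0 φ t + (1 / 2) * ux t * pd 1 φ t + φ t * Real.sin (u t)
        = pd 0 Nf t + pd 1 M t := by
  intro ux uy uxx uxy uxxx φ M Nf t
  have hux : ContDiff ℝ (⊤ : ℕ∞) ux := contDiff_pd 0 hu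
  have huy : ContDiff ℝ (⊤ : ℕ∞) uy := contDiff_pd 1 hu
  have huxx : ContDiff ℝ (⊤ : ℕ∞) uxx := contDiff_pd 0 hux
  have huxy : ContDiff ℝ (⊤ : ℕ∞) uxy := contDiff_pd 1 hux
  have huxxx : ContDiff ℝ (⊤ : ℕ∞) uxxx := contDiff_pd 0 huxx
  have hφ : ContDiff ℝ (⊤ : ℕ∞) φ := huxxx.add (contDiff_const.mul (hux.pow 3))
  -- differentiability at any point
  have D : ∀ (f : (Fin 2 → ℝ) → ℝ), ContDiff ℝ (⊤ : ℕ∞) f → ∀ s, DifferentiableAt ℝ f s :=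
    fun f hf s => (hf.differentiable (by simp)) s
  have hcos : ContDiff ℝ (⊤ : ℕ∞) (fun s => Real.cos (u s)) := Real.contDiff_cos.comp hu
  have hsin : ContDiff ℝ (⊤ : ℕ∞) (fun s => Real.sin (u s)) := Real.contDiff_sin.comp hu
  -- expand pd i φ
  have hpdφ : ∀ (i : Fin 2) (s : Fin 2 → ℝ),
      pd i φ s = pd i uxxx s + (1/2) * (3 * ux s ^ 2 * pd i ux s) := by
    intro i s
    rw [show φ = fun t => uxxx t + (1 / 2) * (ux t) ^ 3 from rfl,
      pd_add (D _ huxxx s) (D _ (contDiff_const.mul (hux.pow 3)) s),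
      pd_const_mul _ (D _ (hux.pow 3) s), pd_pow 3 (D _ hux s)]
    norm_num
  -- expand pd 1 M
  have hM1 : pd 1 M t = (1/2) * pd 1 φ t * ux t + (1/2) * φ t * pd 1 ux t
      - (1/8) * (4 * ux t ^ 3 * pd 1 ux t) + (1/2) * (2 * uxx t * pd 1 uxx t) := by
    rw [show M = fun t => (1 / 2) * φ t * ux t - (1 / 8) * (ux t) ^ 4
        + (1 / 2) * (uxx t) ^ 2 from rfl]
    rw [pd_add (D _ (((contDiff_const.mul hφ).mul hux).sub (contDiff_const.mul (hux.pow 4))) t) (D _ (contDiff_const.mul (huxx.pow 2)) t)]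
    rw [pd_sub (D _ ((contDiff_const.mul hφ).mul hux) t) (D _ (contDiff_const.mul (hux.pow 4)) t)]
    rw [pd_mul (D _ (contDiff_const.mul hφ) t) (D _ hux t)]
    rw [pd_const_mul _ (D _ hφ t), pd_const_mul _ (D _ (hux.pow 4) t),
      pd_const_mul _ (D _ (huxx.pow 2) t), pd_pow 4 (D _ hux t), pd_pow 2 (D _ huxx t)]
    push_cast; ring
  -- expand pd 0 Nf
  have hN0 : pd 0 Nf t = ((1/2) * pd 0 φ t * uy t + (1/2) * φ t * pd 0 uy t)
      - ((1/2) * (2 * ux t * pd 0 ux t) * Real.cos (u t)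
          + (1/2) * ux t ^ 2 * (-Real.sin (u t) * pd 0 u t))
      - (pd 0 uxx t * (uxy t - Real.sin (u t))
          + uxx t * (pd 0 uxy t - Real.cos (u t) * pd 0 u t)) := by
    rw [show Nf = fun t => (1 / 2) * φ t * uy t - (1 / 2) * (ux t) ^ 2 * Real.cos (u t)
        - uxx t * (uxy t - Real.sin (u t)) from rfl]
    have h1 : ContDiff ℝ (⊤ : ℕ∞) (fun s => (1/2) * φ s * uy s) := (contDiff_const.mul hφ).mul huy
    have h2 : ContDiff ℝ (⊤ : ℕ∞) (fun s => (1/2) * (ux s)^2 * Real.cos (u s)) :=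
      (contDiff_const.mul (hux.pow 2)).mul hcos
    have h3 : ContDiff ℝ (⊤ : ℕ∞) (fun s => uxx s * (uxy s - Real.sin (u s))) :=
      huxx.mul (huxy.sub hsin)
    rw [pd_sub (D _ (h1.sub h2) t) (D _ h3 t), pd_sub (D _ h1 t) (D _ h2 t)]
    rw [pd_mul (D _ (contDiff_const.mul hφ) t) (D _ huy t),
      pd_const_mul _ (D _ hφ t),
      pd_mul (D _ (contDiff_const.mul (hux.pow 2)) t) (D _ hcos t),
      pd_const_mul _ (D _ (hux.pow 2) t), pd_pow 2 (D _ hux t),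
      pd_cos (D _ hu t),
      pd_mul (D _ huxx t) (D _ (huxy.sub hsin) t),
      pd_sub (D _ huxy t) (D _ hsin t),
      pd_sin (D _ hu t)]
    push_cast; ring
  -- commutation relations
  have c1 : pd 0 uy t = pd 1 ux t := pd_comm hu 0 1 t
  have c2 : pd 0 uxy t = pd 1 uxx t := pd_comm hux 0 1 t
  rw [hN0, hM1, hpdφ 0 t, hpdφ 1 t, c1, c2]
  have hφt : φ t = uxxx t + (1/2) * (ux t)^3 := rfl
  have huxyt : uxy t = pd 1 ux t := rfl
  have huxxxt : uxxx t = pd 0 uxx t := rfl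
  have huxt : ux t = pd 0 u t := rfl
  rw [hφt, huxyt, huxxxt, huxt]
  ring

end
end

section
/- For every smooth u: ℝ³ → ℝ with coordinates (x,y,z), define L₁₂ := (1/2)u_x u_y − cos u, L₁₃ := (1/2)u_x u_z − (1/8)u_x⁴ + (1/2)u_xx², and L₂₃ := −(1/2)u_y u_z + (1/2)u_x²·cos u + u_xx·(u_xy − sin u), each a smooth function on ℝ³. Then the identity ∂_z L₁₂ − ∂_y L₁₃ + ∂_x L₂₃ = −(u_z − (1/2)u_x³ − u_xxx)·(u_xy − sin u) holds identically on ℝ³. In particular, the Lagrangian two-form 𝓛 = L₁₂ dx∧dy + L₁₃ dx∧dz + L₂₃ dy∧dz is closed on every simultaneous solution of the sine-Gordon equation u_xy = sin u and of the modified KdV equation u_z = u_xxx + (1/2)u_x³. -/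
noncomputable section

lemma pd_contDiff {N : ℕ} (i : Fin N) {f : (Fin N → ℝ) → ℝ} (hf : ContDiff ℝ (⊤ : ℕ∞) f) :
    ContDiff ℝ (⊤ : ℕ∞) (pd i f) :=
  (hf.fderiv_right (by simp)).clm_apply contDiff_const

lemma pd_eq {N : ℕ} {f : (Fin N → ℝ) → ℝ} {t : Fin N → ℝ} {C : (Fin N → ℝ) →L[ℝ] ℝ}
    (i : Fin N) (h : HasFDerivAt f C t) :
    pd i f t = C (Pi.single i 1) := by
  simp only [pd]; rw [h.fderiv]

lemma pd_comm {N : ℕ} (i j : Fin N) {f : (Fin N → ℝ) → ℝ} (hf : ContDiff ℝ (⊤ : ℕ∞) f)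
    (t : Fin N → ℝ) : pd i (pd j f) t = pd j (pd i f) t := by
  have hder : ∀ y, HasFDerivAt f (fderiv ℝ f y) y := fun y =>
    (hf.differentiable (by simp) y).hasFDerivAt
  have h2 : ContDiff ℝ (⊤ : ℕ∞) (fderiv ℝ f) := hf.fderiv_right (by simp)
  have hsnd : HasFDerivAt (fderiv ℝ f) (fderiv ℝ (fderiv ℝ f) t) t :=
    (h2.differentiable (by simp) t).hasFDerivAt
  have key := second_derivative_symmetric hder hsnd (Pi.single i 1) (Pi.single j 1)
  have e : ∀ v w : Fin N → ℝ,
      fderiv ℝ (fun s => fderiv ℝ f s v) t w = fderiv ℝ (fderiv ℝ f) t w v := by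
    intro v w
    have h : HasFDerivAt (fun s => fderiv ℝ f s v)
        ((ContinuousLinearMap.apply ℝ ℝ v).comp (fderiv ℝ (fderiv ℝ f) t)) t :=
      (ContinuousLinearMap.apply ℝ ℝ v).hasFDerivAt.comp t hsnd
    rw [h.fderiv]; rfl
  calc pd i (pd j f) t
      = fderiv ℝ (fun s => fderiv ℝ f s (Pi.single j 1)) t (Pi.single i 1) := rfl
    _ = fderiv ℝ (fderiv ℝ f) t (Pi.single i 1) (Pi.single j 1) := e _ _
    _ = fderiv ℝ (fderiv ℝ f) t (Pi.single j 1) (Pi.single i 1) := key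
    _ = fderiv ℝ (fun s => fderiv ℝ f s (Pi.single i 1)) t (Pi.single j 1) := (e _ _).symm
    _ = pd j (pd i f) t := rfl

/-- for smooth `u : ℝ³ → ℝ` (coordinates `x = 0`, `y = 1`, `z = 2`), with
`L₁₂ := ½u_x u_y − cos u`, `L₁₃ := ½u_x u_z − ⅛u_x⁴ + ½u_xx²`,
`L₂₃ := −½u_y u_z + ½u_x²·cos u + u_xx·(u_xy − sin u)`, the identity
`∂_z L₁₂ − ∂_y L₁₃ + ∂_x L₂₃ = −(u_z − ½u_x³ − u_xxx)·(u_xy − sin u)` holds on `ℝ³`;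
in particular the Lagrangian two-form is closed on every simultaneous solution of the
sine-Gordon equation and the modified KdV equation. -/
theorem stmt_5 (u : (Fin 3 → ℝ) → ℝ) (hu : ContDiff ℝ (⊤ : ℕ∞) u) :
    let ux := pd 0 u
    let uy := pd 1 u
    let uz := pd 2 u
    let uxx := pd 0 ux
    let uxy := pd 1 ux
    let uxxx := pd 0 uxx
    let L12 : (Fin 3 → ℝ) → ℝ := fun t =>
      (1 / 2) * ux t * uy t - Real.cos (u t)
    let L13 : (Fin 3 → ℝ) → ℝ := fun t =>
      (1 / 2) * ux t * uz t - (1 / 8) * (ux t) ^ 4 + (1 / 2) * (uxx t) ^ 2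
    let L23 : (Fin 3 → ℝ) → ℝ := fun t =>
      -(1 / 2) * uy t * uz t + (1 / 2) * (ux t) ^ 2 * Real.cos (u t)
        + uxx t * (uxy t - Real.sin (u t))
    ∀ t : Fin 3 → ℝ,
      pd 2 L12 t - pd 1 L13 t + pd 0 L23 t
        = -(uz t - (1 / 2) * (ux t) ^ 3 - uxxx t) * (uxy t - Real.sin (u t)) := by
  intro ux uy uz uxx uxy uxxx L12 L13 L23 t
  have hx : ContDiff ℝ (⊤ : ℕ∞) (pd (0 : Fin 3) u) := pd_contDiff _ hu
  have hy : ContDiff ℝ (⊤ : ℕ∞) (pd (1 : Fin 3) u) := pd_contDiff _ hu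
  have hz : ContDiff ℝ (⊤ : ℕ∞) (pd (2 : Fin 3) u) := pd_contDiff _ hu
  have hxx : ContDiff ℝ (⊤ : ℕ∞) (pd (0 : Fin 3) (pd 0 u)) := pd_contDiff _ hx
  have hxy : ContDiff ℝ (⊤ : ℕ∞) (pd (1 : Fin 3) (pd 0 u)) := pd_contDiff _ hx
  have Hu : HasFDerivAt u (fderiv ℝ u t) t := (hu.differentiable (by simp) t).hasFDerivAt
  have Hx : HasFDerivAt (pd (0 : Fin 3) u) (fderiv ℝ (pd 0 u) t) t :=
    (hx.differentiable (by simp) t).hasFDerivAt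
  have Hy : HasFDerivAt (pd (1 : Fin 3) u) (fderiv ℝ (pd 1 u) t) t :=
    (hy.differentiable (by simp) t).hasFDerivAt
  have Hz : HasFDerivAt (pd (2 : Fin 3) u) (fderiv ℝ (pd 2 u) t) t :=
    (hz.differentiable (by simp) t).hasFDerivAt
  have Hxx : HasFDerivAt (pd (0 : Fin 3) (pd 0 u)) (fderiv ℝ (pd 0 (pd 0 u)) t) t :=
    (hxx.differentiable (by simp) t).hasFDerivAt
  have Hxy : HasFDerivAt (pd (1 : Fin 3) (pd 0 u)) (fderiv ℝ (pd 1 (pd 0 u)) t) t :=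
    (hxy.differentiable (by simp) t).hasFDerivAt
  have H12 : HasFDerivAt (fun s => 1 / 2 * pd 0 u s * pd 1 u s - Real.cos (u s)) _ t :=
    ((Hx.const_mul (1 / 2 : ℝ)).mul Hy).sub Hu.cos
  have Hp4 : HasFDerivAt (fun s => (pd 0 u s) ^ 4) ((4 * pd 0 u t ^ 3) • fderiv ℝ (pd 0 u) t) t := by
    simpa [Function.comp_def] using (hasDerivAt_pow 4 (pd 0 u t)).comp_hasFDerivAt t Hx
  have Hp2 : HasFDerivAt (fun s => (pd 0 (pd 0 u) s) ^ 2)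
      ((2 * pd 0 (pd 0 u) t ^ 1) • fderiv ℝ (pd 0 (pd 0 u)) t) t := by
    simpa [Function.comp_def] using (hasDerivAt_pow 2 (pd 0 (pd 0 u) t)).comp_hasFDerivAt t Hxx
  have Hxp2 : HasFDerivAt (fun s => (pd 0 u s) ^ 2)
      ((2 * pd 0 u t ^ 1) • fderiv ℝ (pd 0 u) t) t := by
    simpa [Function.comp_def] using (hasDerivAt_pow 2 (pd 0 u t)).comp_hasFDerivAt t Hx
  have H13 : HasFDerivAt (fun s => 1 / 2 * pd 0 u s * pd 2 u s - 1 / 8 * (pd 0 u s) ^ 4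
      + 1 / 2 * (pd 0 (pd 0 u) s) ^ 2) _ t :=
    (((Hx.const_mul (1 / 2 : ℝ)).mul Hz).sub (Hp4.const_mul (1 / 8 : ℝ))).add
      (Hp2.const_mul (1 / 2 : ℝ))
  have H23 : HasFDerivAt (fun s => -(1 / 2) * pd 1 u s * pd 2 u s
      + 1 / 2 * (pd 0 u s) ^ 2 * Real.cos (u s)
      + pd 0 (pd 0 u) s * (pd 1 (pd 0 u) s - Real.sin (u s))) _ t :=
    (((Hy.const_mul (-(1 / 2) : ℝ)).mul Hz).add
      ((Hxp2.const_mul (1 / 2 : ℝ)).mul Hu.cos)).add (Hxx.mul (Hxy.sub Hu.sin))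
  have E12 : pd 2 (fun s => 1 / 2 * pd 0 u s * pd 1 u s - Real.cos (u s)) t
      = 1 / 2 * pd 2 (pd 0 u) t * pd 1 u t + 1 / 2 * pd 0 u t * pd 2 (pd 1 u) t
        + Real.sin (u t) * pd 2 u t := by
    rw [pd_eq 2 H12]
    simp only [pd, ContinuousLinearMap.sub_apply, ContinuousLinearMap.add_apply,
      ContinuousLinearMap.coe_smul', Pi.smul_apply, smul_eq_mul,
      ContinuousLinearMap.neg_apply]
    ring
  have E13 : pd 1 (fun s => 1 / 2 * pd 0 u s * pd 2 u s - 1 / 8 * (pd 0 u s) ^ 4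
        + 1 / 2 * (pd 0 (pd 0 u) s) ^ 2) t
      = 1 / 2 * pd 1 (pd 0 u) t * pd 2 u t + 1 / 2 * pd 0 u t * pd 1 (pd 2 u) t
        - 1 / 2 * pd 0 u t ^ 3 * pd 1 (pd 0 u) t
        + pd 0 (pd 0 u) t * pd 1 (pd 0 (pd 0 u)) t := by
    rw [pd_eq 1 H13]
    simp only [pd, ContinuousLinearMap.sub_apply, ContinuousLinearMap.add_apply,
      ContinuousLinearMap.coe_smul', Pi.smul_apply, smul_eq_mul,
      ContinuousLinearMap.neg_apply]
    ring
  have E23 : pd 0 (fun s => -(1 / 2) * pd 1 u s * pd 2 u s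
        + 1 / 2 * (pd 0 u s) ^ 2 * Real.cos (u s)
        + pd 0 (pd 0 u) s * (pd 1 (pd 0 u) s - Real.sin (u s))) t
      = -(1 / 2) * pd 0 (pd 1 u) t * pd 2 u t - 1 / 2 * pd 1 u t * pd 0 (pd 2 u) t
        + pd 0 u t * pd 0 (pd 0 u) t * Real.cos (u t)
        - 1 / 2 * pd 0 u t ^ 2 * Real.sin (u t) * pd 0 u t
        + pd 0 (pd 0 (pd 0 u)) t * (pd 1 (pd 0 u) t - Real.sin (u t))
        + pd 0 (pd 0 u) t * (pd 0 (pd 1 (pd 0 u)) t - Real.cos (u t) * pd 0 u t) := by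
    rw [pd_eq 0 H23]
    simp only [pd, ContinuousLinearMap.sub_apply, ContinuousLinearMap.add_apply,
      ContinuousLinearMap.coe_smul', Pi.smul_apply, smul_eq_mul,
      ContinuousLinearMap.neg_apply]
    ring
  have c1 : pd 2 (pd (0 : Fin 3) u) t = pd 0 (pd 2 u) t := pd_comm 2 0 hu t
  have c2 : pd 2 (pd (1 : Fin 3) u) t = pd 1 (pd 2 u) t := pd_comm 2 1 hu t
  have c3 : pd 0 (pd (1 : Fin 3) u) t = pd 1 (pd 0 u) t := pd_comm 0 1 hu t
  have c4 : pd 1 (pd (0 : Fin 3) (pd 0 u)) t = pd 0 (pd 1 (pd 0 u)) t := pd_comm 1 0 hx t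
  show pd 2 (fun s => 1 / 2 * pd 0 u s * pd 1 u s - Real.cos (u s)) t
      - pd 1 (fun s => 1 / 2 * pd 0 u s * pd 2 u s - 1 / 8 * (pd 0 u s) ^ 4
        + 1 / 2 * (pd 0 (pd 0 u) s) ^ 2) t
      + pd 0 (fun s => -(1 / 2) * pd 1 u s * pd 2 u s
        + 1 / 2 * (pd 0 u s) ^ 2 * Real.cos (u s)
        + pd 0 (pd 0 u) s * (pd 1 (pd 0 u) s - Real.sin (u s))) t
      = -(pd 2 u t - 1 / 2 * (pd 0 u t) ^ 3 - pd 0 (pd 0 (pd 0 u)) t)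
        * (pd 1 (pd 0 u) t - Real.sin (u t))
  rw [E12, E13, E23, c1, c2, c3, c4]
  ring
end
end

section
/- Let h ∈ 𝓡 be a differential polynomial depending only on the variables v_{x^α} with α ≥ 1 (in particular not on v itself), let g := δh/δv_x, and for a direction m ∈ {2, …, N} define a := Σ_{α≥0} v_{x^α t_m} · (δh/δv_{x^{α+1}}) (a finite sum). Then the identity D_m(h) + D_x(g)·v_{t_m} = D_x(a) holds in 𝓡. -/
open MvPolynomial

noncomputable section

/-- The ring `𝓡` of differential polynomials of a field `v` in independent variables
`t_1, …, t_N`: the polynomial ring over `ℝ` in commuting variables `v_I` indexed by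
multi-indices `I : Fin N → ℕ`. -/
abbrev DiffPoly (N : ℕ) := MvPolynomial (Fin N → ℕ) ℝ

/-- The total derivative `D_m`, determined by `D_m (v_I) = v_{I + e_m}`. -/
noncomputable def totalDeriv {N : ℕ} (m : Fin N) :
    Derivation ℝ (DiffPoly N) (DiffPoly N) :=
  MvPolynomial.mkDerivation ℝ fun I => X (I + Pi.single m 1)

/-- The x-variational derivative `δf/δv_I = Σ_α (−1)^α D_x^α (∂f/∂v_{I+α·e_x})`,
where `x` is the coordinate direction playing the role of `t_1`. -/
noncomputable def varDeriv {N : ℕ} (x : Fin N) (I : Fin N → ℕ) (f : DiffPoly N) :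
    DiffPoly N :=
  ∑ᶠ α : ℕ, (-1 : ℝ) ^ α • (fun p => totalDeriv x p)^[α] (pderiv (I + α • Pi.single x 1) f)


/-! The coefficients of `a` telescope: with `G β := v_{x^β t_m} · δh/δv_{x^β}`, the recursion
`D_x(δh/δv_{I+e_x}) = ∂h/∂v_I − δh/δv_I` gives
`D_x(v_{x^α t_m} · δh/δv_{x^{α+1}}) = G (α+1) − G α + v_{x^α t_m} · ∂h/∂v_{x^α}`.
Summing over `α`, the last terms add up to `D_m h` by the chain rule, since `h` only involves the
`v_{x^α}`, and the telescoping part leaves `−G 0 = −v_{t_m} · δh/δv`. Finally `∂h/∂v = 0`, so the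
recursion at `I = 0` gives `D_x g = −δh/δv`. -/

theorem finsum_eq_sum_range_of_eq_zero {M : Type*} [AddCommMonoid M] {f : ℕ → M} {n : ℕ}
    (hf : ∀ α, n ≤ α → f α = 0) : ∑ᶠ α, f α = ∑ α ∈ Finset.range n, f α :=
  finsum_eq_sum_of_support_subset f fun α hα =>
    Finset.mem_coe.2 (Finset.mem_range.2 (lt_of_not_ge fun h => hα (hf α h)))

namespace MvPolynomial

variable {R σ : Type*} [CommRing R]

theorem vars_subset_of_mem_adjoin_X {s : Set σ} {p : MvPolynomial σ R}
    (hp : p ∈ Algebra.adjoin R (X '' s)) : ↑p.vars ⊆ s := by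
  rwa [← supported_eq_adjoin_X, mem_supported] at hp

theorem derivation_eq_sum_mul_pderiv (D : Derivation R (MvPolynomial σ R) (MvPolynomial σ R))
    {f : MvPolynomial σ R} {s : Finset σ} (hs : f.vars ⊆ s) :
    D f = ∑ i ∈ s, D (X i) * pderiv i f := by
  classical
  let D' : Derivation R (MvPolynomial σ R) (MvPolynomial σ R) := ∑ i ∈ s, D (X i) • pderiv i
  have hD' : ∀ g, D' g = ∑ i ∈ s, D (X i) * pderiv i g := fun g => by
    rw [← Derivation.coeFnAddMonoidHom_apply, map_sum, Finset.sum_apply]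
    rfl
  rw [← hD']
  refine derivation_eq_of_forall_mem_vars fun j hj => ?_
  simp only [hD', pderiv_X, Pi.single_apply, mul_ite, mul_one, mul_zero, Finset.sum_ite_eq,
    if_pos (hs hj)]

end MvPolynomial

section

variable {N : ℕ} (x : Fin N)

theorem totalDeriv_X (m : Fin N) (I : Fin N → ℕ) :
    totalDeriv m (X I : DiffPoly N) = X (I + Pi.single m 1) :=
  mkDerivation_X _ _ _

theorem exists_forall_mem_vars_apply_lt (f : DiffPoly N) : ∃ n, ∀ J ∈ f.vars, J x < n :=
  ⟨f.vars.sup (· x) + 1, fun _ hJ => Nat.lt_succ_of_le (Finset.le_sup (f := (· x)) hJ)⟩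

theorem nsmul_single_apply (α : ℕ) : (α • Pi.single x 1 : Fin N → ℕ) x = α := by
  simp

theorem nsmul_single_injective : Function.Injective fun α : ℕ => (α • Pi.single x 1 : Fin N → ℕ) :=
  fun α β hαβ => by simpa only [nsmul_single_apply] using congrFun hαβ x

variable {x}

theorem pderiv_eq_zero_of_forall_mem_vars_apply_lt {f : DiffPoly N} {n : ℕ}
    (hf : ∀ J ∈ f.vars, J x < n) {I : Fin N → ℕ} (hI : n ≤ I x) : pderiv I f = 0 :=
  pderiv_eq_zero_of_notMem_vars fun hmem => (hf I hmem).not_ge hI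

theorem varDeriv_eq_sum_range {f : DiffPoly N} {I : Fin N → ℕ} {n : ℕ}
    (hf : ∀ J ∈ f.vars, J x < I x + n) :
    varDeriv x I f = ∑ α ∈ Finset.range n,
      (-1 : ℝ) ^ α • (fun p => totalDeriv x p)^[α] (pderiv (I + α • Pi.single x 1) f) := by
  refine finsum_eq_sum_range_of_eq_zero fun α hα => ?_
  rw [pderiv_eq_zero_of_forall_mem_vars_apply_lt hf
    (by simp only [Pi.add_apply, nsmul_single_apply]; omega), iterate_map_zero, smul_zero]

theorem varDeriv_eq_zero {f : DiffPoly N} {I : Fin N → ℕ} (hf : ∀ J ∈ f.vars, J x < I x) :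
    varDeriv x I f = 0 :=
  varDeriv_eq_sum_range (n := 0) hf

theorem totalDeriv_varDeriv_add_single (f : DiffPoly N) (I : Fin N → ℕ) :
    totalDeriv x (varDeriv x (I + Pi.single x 1) f) = pderiv I f - varDeriv x I f := by
  obtain ⟨n, hn⟩ := exists_forall_mem_vars_apply_lt x f
  rw [varDeriv_eq_sum_range (n := n) fun J hJ => by
      simp only [Pi.add_apply, Pi.single_eq_same]; linarith [hn J hJ],
    varDeriv_eq_sum_range (n := n + 1) fun J hJ => by linarith [hn J hJ],
    Finset.sum_range_succ', map_sum, pow_zero, one_smul, zero_smul, add_zero]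
  simp only [Function.iterate_zero, id_eq, sub_add_eq_sub_sub, sub_sub_cancel_left,
    ← Finset.sum_neg_distrib, Derivation.map_smul, Function.iterate_succ_apply', pow_succ,
    mul_neg_one, neg_smul, neg_neg, succ_nsmul, add_assoc, add_comm (Pi.single x 1 : Fin N → ℕ)]

variable {m : Fin N}

theorem totalDeriv_X_mul_varDeriv_succ (f : DiffPoly N) (α : ℕ) :
    totalDeriv x (X (α • Pi.single x 1 + Pi.single m 1) * varDeriv x ((α + 1) • Pi.single x 1) f)
      = X ((α + 1) • Pi.single x 1 + Pi.single m 1) * varDeriv x ((α + 1) • Pi.single x 1) f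
        - X (α • Pi.single x 1 + Pi.single m 1) * varDeriv x (α • Pi.single x 1) f
        + X (α • Pi.single x 1 + Pi.single m 1) * pderiv (α • Pi.single x 1) f := by
  rw [Derivation.leibniz, smul_eq_mul, smul_eq_mul, succ_nsmul, totalDeriv_varDeriv_add_single,
    totalDeriv_X, add_right_comm]
  ring

theorem totalDeriv_eq_sum_range {h : DiffPoly N} {n : ℕ}
    (hh : ∀ J ∈ h.vars, J = J x • Pi.single x 1) (hn : ∀ J ∈ h.vars, J x < n) :
    totalDeriv m h = ∑ α ∈ Finset.range n,
      X (α • Pi.single x 1 + Pi.single m 1) * pderiv (α • Pi.single x 1) h := by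
  have hvars : h.vars ⊆ (Finset.range n).image (· • Pi.single x 1) := fun J hJ =>
    Finset.mem_image.2 ⟨J x, Finset.mem_range.2 (hn J hJ), (hh J hJ).symm⟩
  rw [derivation_eq_sum_mul_pderiv _ hvars,
    Finset.sum_image fun α _ β _ => (nsmul_single_injective x ·)]
  simp only [totalDeriv_X]

theorem totalDeriv_finsum_X_mul_varDeriv {h : DiffPoly N}
    (hh : ∀ J ∈ h.vars, J = J x • Pi.single x 1) :
    totalDeriv x (∑ᶠ α : ℕ,
        X (α • Pi.single x 1 + Pi.single m 1) * varDeriv x ((α + 1) • Pi.single x 1) h)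
      = totalDeriv m h - X (Pi.single m 1) * varDeriv x 0 h := by
  obtain ⟨n, hn⟩ := exists_forall_mem_vars_apply_lt x h
  let G : ℕ → DiffPoly N := fun β =>
    X (β • Pi.single x 1 + Pi.single m 1) * varDeriv x (β • Pi.single x 1) h
  have hGn : G n = 0 := by
    have hvn : varDeriv x (n • Pi.single x 1) h = 0 :=
      varDeriv_eq_zero fun J hJ => by simpa only [nsmul_single_apply] using hn J hJ
    simp only [G, hvn, mul_zero]
  have hG0 : G 0 = X (Pi.single m 1) * varDeriv x 0 h := by
    simp only [G, zero_smul, zero_add]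
  rw [finsum_eq_sum_range_of_eq_zero (n := n) fun α hα => by
      rw [varDeriv_eq_zero fun J hJ => by rw [nsmul_single_apply]; linarith [hn J hJ], mul_zero],
    map_sum, totalDeriv_eq_sum_range hh hn]
  simp only [totalDeriv_X_mul_varDeriv_succ, Finset.sum_add_distrib]
  rw [Finset.sum_range_sub G n, hGn, hG0]
  ring

end

/-- for `h` depending only on `v_{x^α}`, `α ≥ 1`, with `g := δh/δv_x` and
`a := Σ_α v_{x^α t_m}·(δh/δv_{x^{α+1}})`, one has `D_m(h) + D_x(g)·v_{t_m} = D_x(a)`. -/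
theorem stmt_10 (N : ℕ) (x : Fin N)
    (h : DiffPoly N)
    (hdep : h ∈ Algebra.adjoin ℝ
      {p : DiffPoly N | ∃ α : ℕ, 1 ≤ α ∧ p = X (α • Pi.single x 1)})
    (m : Fin N) :
    totalDeriv m h + totalDeriv x (varDeriv x (Pi.single x 1) h) * X (Pi.single m 1)
      = totalDeriv x (∑ᶠ α : ℕ,
          X (α • Pi.single x 1 + Pi.single m 1) * varDeriv x ((α + 1) • Pi.single x 1) h) := by
  have hvars : (h.vars : Set (Fin N → ℕ)) ⊆ {J | ∃ α : ℕ, 1 ≤ α ∧ J = α • Pi.single x 1} := by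
    have hgen : X '' {J | ∃ α : ℕ, 1 ≤ α ∧ J = α • Pi.single x 1}
        = {p : DiffPoly N | ∃ α : ℕ, 1 ≤ α ∧ p = X (α • Pi.single x 1)} := by
      ext p
      simp [eq_comm]
    exact vars_subset_of_mem_adjoin_X (hgen ▸ hdep)
  have hh : ∀ J ∈ h.vars, J = J x • Pi.single x 1 := fun J hJ => by
    obtain ⟨α, -, rfl⟩ := hvars hJ
    rw [nsmul_single_apply]
  have hv : pderiv 0 h = 0 := pderiv_eq_zero_of_notMem_vars fun h0 => by
    obtain ⟨α, hα, hα0⟩ := hvars h0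
    have h0x := congrFun hα0 x
    rw [Pi.zero_apply, nsmul_single_apply] at h0x
    omega
  have hg : totalDeriv x (varDeriv x (Pi.single x 1) h) = -varDeriv x 0 h := by
    simpa [hv] using totalDeriv_varDeriv_add_single (x := x) h 0
  rw [totalDeriv_finsum_X_mul_varDeriv hh, hg]
  ring
end
end

section
/- Let (r_k)_{k≥0} be a normalized KdV resolvent and let g_k ∈ 𝓡 be the image of r_k under the substitution u_{x^α} ↦ v_{x^{α+1}}. Then for all i, j ≥ 1 there exists a differential polynomial b_{ij} ∈ 𝓡 with zero constant term such that D_x(b_{ij}) = D_x(g_i)·g_j. -/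
open MvPolynomial

noncomputable section

/-- The ring `𝓡_u = ℝ[u_{x^α} : α ∈ ℕ]` of differential polynomials in one variable `x`:
the variable `X α` stands for `u_{x^α}` (so `X 0 = u`, `X 1 = u_x`, …). -/
abbrev DiffPoly1 := MvPolynomial ℕ ℝ

/-- The total derivative `D_x`, determined by `D_x (u_{x^α}) = u_{x^{α+1}}`. -/
noncomputable def Dx : Derivation ℝ DiffPoly1 DiffPoly1 :=
  MvPolynomial.mkDerivation ℝ fun α => X (α + 1)

/-- The variational derivative `δf/δu := Σ_α (−1)^α D_x^α (∂f/∂u_{x^α})`. -/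
noncomputable def varDerivU (f : DiffPoly1) : DiffPoly1 :=
  ∑ᶠ α : ℕ, (-1 : ℝ) ^ α • (fun p => Dx p)^[α] (pderiv α f)

/-- A normalized KdV resolvent: a sequence `(r_k)` with `r_0 = 1/2`,
`D_x(r_{k+1}) = D_x³(r_k) + 4u·D_x(r_k) + 2u_x·r_k`, normalized so that for `k ≥ 1`
`Σ_{a+b=k−1}( r_a·D_x²(r_b) − ½·D_x(r_a)·D_x(r_b) + 2u·r_a·r_b ) = ½·Σ_{a+b=k} r_a·r_b`. -/
def IsNormalizedKdVResolvent (r : ℕ → DiffPoly1) : Prop :=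
  r 0 = C (1 / 2) ∧
  (∀ k : ℕ, Dx (r (k + 1)) =
      (fun p => Dx p)^[3] (r k) + (4 : ℝ) • (X 0 * Dx (r k)) + (2 : ℝ) • (X 1 * r k)) ∧
  (∀ k : ℕ, 1 ≤ k →
    ∑ p ∈ Finset.HasAntidiagonal.antidiagonal (k - 1),
        (r p.1 * (fun q => Dx q)^[2] (r p.2)
          - (1 / 2 : ℝ) • (Dx (r p.1) * Dx (r p.2))
          + (2 : ℝ) • (X 0 * (r p.1 * r p.2)))
      = (1 / 2 : ℝ) • ∑ p ∈ Finset.HasAntidiagonal.antidiagonal k, r p.1 * r p.2)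

/-- The substitution `u_{x^α} ↦ v_{x^{α+1}}`, mapping `r_k[u]` to `g_k[v] = r_k[v_x]`
(in the ring `𝓡 = ℝ[v_{x^α}]`, where now `X α` stands for `v_{x^α}`). -/
noncomputable def substShift : DiffPoly1 →ₐ[ℝ] DiffPoly1 :=
  aeval fun α => X (α + 1)

/-!
Write `r'` for `D_x r`. The recursion gives, for all `i, j`, the identity
`r_{i+1}' r_j + r_{j+1}' r_i = D_x(r_j r_i'' + r_i r_j'' − r_i' r_j' + 4u r_i r_j)`.
Rewriting `r_{j+1}' r_i = D_x(r_i r_{j+1}) − r_i' r_{j+1}`, the exactness of `r_{i+1}' r_j`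
reduces to that of `r_i' r_{j+1}`, and by induction on `i` to `r_0' = 0`.
The substitution `u_{x^α} ↦ v_{x^{α+1}}` commutes with `D_x`, so it carries these
antiderivatives over to `D_x(g_i) g_j`; subtracting the constant term normalizes them.
-/

@[simp]
lemma Dx_C (a : ℝ) : Dx (C a) = 0 :=
  Dx.map_algebraMap a

@[simp]
lemma Dx_X (n : ℕ) : Dx (X n) = X (n + 1) :=
  mkDerivation_X ℝ _ n

lemma exists_constantCoeff_eq_zero_Dx_eq (h : DiffPoly1) :
    ∃ b : DiffPoly1, constantCoeff b = 0 ∧ Dx b = Dx h :=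
  ⟨h - C (constantCoeff h), by simp, by simp⟩

lemma substShift_X (n : ℕ) : substShift (X n) = X (n + 1) :=
  aeval_X _ n

lemma substShift_Dx (p : DiffPoly1) : substShift (Dx p) = Dx (substShift p) := by
  induction p using MvPolynomial.induction_on with
  | C a => simp only [Dx_C, map_zero, substShift, aeval_C, algebraMap_eq]
  | add p q hp hq => simp only [map_add, hp, hq]
  | mul_X p n hp =>
      simp only [Derivation.leibniz, smul_eq_mul, map_add, map_mul, hp, Dx_X, substShift_X]

section Resolvent

variable (r : ℕ → DiffPoly1)
  (hrec : ∀ k : ℕ, Dx (r (k + 1)) =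
      (fun p => Dx p)^[3] (r k) + (4 : ℝ) • (X 0 * Dx (r k)) + (2 : ℝ) • (X 1 * r k))

include hrec

lemma Dx_succ_mul_add_Dx_succ_mul (i j : ℕ) :
    Dx (r (i + 1)) * r j + Dx (r (j + 1)) * r i =
      Dx (r j * Dx (Dx (r i)) + r i * Dx (Dx (r j)) - Dx (r i) * Dx (r j)
        + (4 : ℝ) • (X 0 * (r i * r j))) := by
  simp only [hrec, Function.iterate_succ, Function.iterate_zero, Function.comp_apply, id_eq,
    map_add, map_sub, smul_eq_C_mul, Derivation.leibniz, smul_eq_mul, Dx_X, Dx_C]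
  simp only [map_ofNat]
  ring

lemma Dx_mul_mem_range (h0 : Dx (r 0) = 0) (i j : ℕ) :
    Dx (r i) * r j ∈ LinearMap.range (Dx : DiffPoly1 →ₗ[ℝ] DiffPoly1) := by
  induction i generalizing j with
  | zero => simp [h0]
  | succ i ih =>
      have hsplit : Dx (r (i + 1)) * r j =
          Dx (r j * Dx (Dx (r i)) + r i * Dx (Dx (r j)) - Dx (r i) * Dx (r j)
            + (4 : ℝ) • (X 0 * (r i * r j)) - r i * r (j + 1)) + Dx (r i) * r (j + 1) := by
        rw [map_sub, ← Dx_succ_mul_add_Dx_succ_mul r hrec, Derivation.leibniz, smul_eq_mul,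
          smul_eq_mul]
        ring
      rw [hsplit]
      exact add_mem (LinearMap.mem_range_self _ _) (ih (j + 1))

end Resolvent

/-- for `g_k := r_k[v_x]` and `i, j ≥ 1` there exists `b_{ij}` with zero
constant term and `D_x(b_{ij}) = D_x(g_i)·g_j`. -/
theorem stmt_14 (r : ℕ → DiffPoly1) (hr : IsNormalizedKdVResolvent r) :
    ∀ i j : ℕ, 1 ≤ i → 1 ≤ j →
      ∃ b : DiffPoly1, constantCoeff b = 0 ∧
        Dx b = Dx (substShift (r i)) * substShift (r j) := by
  obtain ⟨h0, hrec, -⟩ := hr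
  intro i j _ _
  obtain ⟨h, hh⟩ := Dx_mul_mem_range r hrec (by rw [h0, Dx_C]) i j
  obtain ⟨b, hb0, hb⟩ := exists_constantCoeff_eq_zero_Dx_eq (substShift h)
  refine ⟨b, hb0, ?_⟩
  rw [hb, ← substShift_Dx, ← substShift_Dx, ← map_mul]
  exact congrArg substShift hh
end
end

section
/- Fix distinct i, j ∈ {2, …, N}. Let h_i, h_j ∈ 𝓡 depend only on the variables v_{x^α} with α ≥ 1; set g_i := δh_i/δv_x, g_j := δh_j/δv_x, L_{1i} := (1/2)v_x v_{t_i} − h_i, L_{1j} := (1/2)v_x v_{t_j} − h_j. Let 𝓢 ⊆ 𝓡 be the subring generated by the variables v_{x^α}, v_{x^α t_i}, v_{x^α t_j}, v_{x^α t_i t_j} (α ≥ 0), and let σ: 𝓢 → ℝ[v_{x^α} : α ≥ 0] be the ℝ-algebra homomorphism fixing each v_{x^α} and sending v_{x^α t_i} ↦ D_x^α(g_i), v_{x^α t_j} ↦ D_x^α(g_j), and v_{x^α t_i t_j} ↦ D_x^α( Σ_{β≥1} (∂g_i/∂v_{x^β})·D_x^β(g_j) ) (substitution of the evolution equations v_{t_i}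 = g_i, v_{t_j} = g_j). Suppose there exists L_{ij} ∈ 𝓢 such that σ( D_j(L_{1i}) − D_i(L_{1j}) + D_x(L_{ij}) ) = 0, i.e. the Lagrangian two-form is closed on solutions. Then the Hamiltonians are in involution: {∫h_i, ∫h_j} = 0, i.e. D_x(δh_i/δv_x)·(δh_j/δv_x) lies in the image of D_x on ℝ[v_{x^α} : α ≥ 0]. -/
open MvPolynomial

noncomputable section

/-- `g := δh/δv_x`, the variational derivative with respect to `v_x`. -/
noncomputable def gOf {N : ℕ} (x : Fin N) (h : DiffPoly N) : DiffPoly N :=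
  varDeriv x (Pi.single x 1) h

/-- The value, on the variable `v_I`, of the substitution `σ` of the evolution equations
`v_{t_i} = g_i`, `v_{t_j} = g_j` (and `v_{t_i t_j} = D_{g_j} g_i`): it fixes `v_{x^α}` and
sends `v_{x^α t_i} ↦ D_x^α(g_i)`, `v_{x^α t_j} ↦ D_x^α(g_j)`,
`v_{x^α t_i t_j} ↦ D_x^α(Σ_{β≥1} (∂g_i/∂v_{x^β})·D_x^β(g_j))`; on variables outside the
subring `𝓢` its value is irrelevant and set to `0`. -/
noncomputable def substVal {N : ℕ} (x i j : Fin N) (Gi Gj Gij : ℕ → DiffPoly N) :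
    (Fin N → ℕ) → DiffPoly N := fun I =>
  if (∀ m, m ≠ x → m ≠ i → m ≠ j → I m = 0) then
    if I i = 0 ∧ I j = 0 then X I
    else if I i = 1 ∧ I j = 0 then Gi (I x)
    else if I i = 0 ∧ I j = 1 then Gj (I x)
    else if I i = 1 ∧ I j = 1 then Gij (I x)
    else 0
  else 0

/-!
Under `σ`, `D_j L_{1i}` becomes `½(v_x·σ(v_{t_i t_j}) + g_i·D_x g_j) − ∂_{g_j} h_i`, where `∂_c`
is the evolutionary derivation with characteristic `c`, and `σ` commutes with `D_x` on `𝓢`.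
Integrating by parts, `∂_c h ≡ (δh/δv)·c` modulo `D_x ℝ[v_{x^α}]`, and `δh/δv = −D_x(δh/δv_x)`
because `h` does not depend on `v` itself. So closedness says `g_j·D_x g_i ≡ g_i·D_x g_j`, and
since these two terms add up to `D_x(g_i g_j)`, each of them is a total `x`-derivative.
-/
section Derivations

theorem Derivation.mem_adjoin_of_forall_mem {R A : Type*} [CommSemiring R] [CommSemiring A]
    [Algebra R A] (D : Derivation R A A) {s : Set A} (hs : ∀ a ∈ s, D a ∈ Algebra.adjoin R s)
    {p : A} (hp : p ∈ Algebra.adjoin R s) : D p ∈ Algebra.adjoin R s := by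
  induction hp using Algebra.adjoin_induction with
  | mem a ha => exact hs a ha
  | algebraMap r => simp
  | add p q _ _ hp hq => simpa using add_mem hp hq
  | mul p q hp' hq' hp hq =>
    simpa [Derivation.leibniz] using add_mem (mul_mem hp' hq) (mul_mem hq' hp)

theorem AlgHom.map_derivation_of_forall_mem_adjoin {R A B : Type*} [CommSemiring R]
    [CommSemiring A] [CommSemiring B] [Algebra R A] [Algebra R B] (φ : A →ₐ[R] B)
    (D₁ : Derivation R A A) (D₂ : Derivation R B B) {s : Set A}
    (hs : ∀ a ∈ s, φ (D₁ a) = D₂ (φ a)) {p : A} (hp : p ∈ Algebra.adjoin R s) :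
    φ (D₁ p) = D₂ (φ p) := by
  induction hp using Algebra.adjoin_induction with
  | mem a ha => exact hs a ha
  | algebraMap r => simp
  | add p q _ _ hp hq => simp [hp, hq]
  | mul p q _ _ hp hq => simp [Derivation.leibniz, hp, hq]

theorem MvPolynomial.derivation_eq_sum_pderiv_mul {R σ : Type*} [CommSemiring R]
    (D : Derivation R (MvPolynomial σ R) (MvPolynomial σ R)) {f : MvPolynomial σ R}
    {s : Finset σ} (hs : f.vars ⊆ s) : D f = ∑ i ∈ s, pderiv i f * D (X i) := by
  classical
  have sum_apply (g : MvPolynomial σ R) :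
      (∑ i ∈ s, D (X i) • pderiv i) g = ∑ i ∈ s, pderiv i g * D (X i) := by
    rw [← Derivation.coeFnAddMonoidHom_apply, map_sum, Finset.sum_apply]
    simp [Derivation.coeFnAddMonoidHom_apply, mul_comm]
  rw [← sum_apply]
  refine derivation_eq_of_forall_mem_vars fun k hk => ?_
  simp [sum_apply, pderiv_X, Pi.single_apply, hs hk]

theorem MvPolynomial.pderiv_mem_supported {R σ : Type*} [CommSemiring R] {s : Set σ}
    (i : σ) {p : MvPolynomial σ R} (hp : p ∈ supported R s) : pderiv i p ∈ supported R s := by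
  classical
  refine (pderiv i).mem_adjoin_of_forall_mem ?_ hp
  rintro _ ⟨k, -, rfl⟩
  rw [pderiv_X, Pi.single_apply]
  split_ifs
  exacts [one_mem _, zero_mem _]

end Derivations

section XPolynomials

variable {N : ℕ} (x : Fin N)

def xVars : Set (Fin N → ℕ) := Set.range fun α : ℕ => α • Pi.single x 1

/-- The algebra `ℝ[v_{x^α} : α ≥ 0]`. -/
abbrev xPolys : Subalgebra ℝ (DiffPoly N) := supported ℝ (xVars x)

/-- The densities in `ℝ[v_{x^α}]` whose formal integral vanishes. -/
def totalDerivImage : Submodule ℝ (DiffPoly N) :=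
  (xPolys x).toSubmodule.map (totalDeriv x).toLinearMap

def xOrder (f : DiffPoly N) : ℕ := f.vars.sup fun J => J x

variable {x}

theorem adjoin_X_xVars :
    Algebra.adjoin ℝ {q : DiffPoly N | ∃ α : ℕ, q = X (α • Pi.single x 1)} = xPolys x := by
  congr 1
  ext q
  simp [xVars, eq_comm]

theorem adjoin_X_xVars_pos :
    Algebra.adjoin ℝ {q : DiffPoly N | ∃ α : ℕ, 1 ≤ α ∧ q = X (α • Pi.single x 1)}
      = supported ℝ (xVars x \ {0}) := by
  congr 1
  ext q
  simp only [Set.mem_ofPred_eq, Set.mem_image, Set.mem_sdiff, xVars, Set.mem_range,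
    Set.mem_singleton_iff]
  constructor
  · rintro ⟨α, hα, rfl⟩
    refine ⟨_, ⟨⟨α, rfl⟩, fun h => ?_⟩, rfl⟩
    simpa [show α ≠ 0 by omega] using congr_fun h x
  · rintro ⟨_, ⟨⟨α, rfl⟩, h⟩, rfl⟩
    exact ⟨α, Nat.one_le_iff_ne_zero.2 fun h0 => h (by simp [h0]), rfl⟩

theorem X_mem_xPolys (α : ℕ) : (X (α • Pi.single x 1) : DiffPoly N) ∈ xPolys x :=
  Algebra.subset_adjoin ⟨_, ⟨α, rfl⟩, rfl⟩

theorem totalDeriv_mem_xPolys {p : DiffPoly N} (hp : p ∈ xPolys x) :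
    totalDeriv x p ∈ xPolys x := by
  refine (totalDeriv x).mem_adjoin_of_forall_mem ?_ hp
  rintro _ ⟨_, ⟨α, rfl⟩, rfl⟩
  rw [totalDeriv_X, ← succ_nsmul]
  exact X_mem_xPolys (α + 1)

theorem iterate_totalDeriv_mem_xPolys (α : ℕ) {p : DiffPoly N} (hp : p ∈ xPolys x) :
    (fun p => totalDeriv x p)^[α] p ∈ xPolys x := by
  induction α generalizing p with
  | zero => exact hp
  | succ n ih => exact ih (totalDeriv_mem_xPolys hp)

theorem varDeriv_mem_xPolys (I : Fin N → ℕ) {p : DiffPoly N} (hp : p ∈ xPolys x) :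
    varDeriv x I p ∈ xPolys x :=
  finsum_induction _ (zero_mem _) (fun _ _ => add_mem) fun α =>
    Subalgebra.smul_mem _ (iterate_totalDeriv_mem_xPolys α (pderiv_mem_supported _ hp)) _

theorem mem_totalDerivImage_iff {p : DiffPoly N} :
    p ∈ totalDerivImage x ↔ ∃ q ∈ xPolys x, totalDeriv x q = p :=
  Submodule.mem_map

theorem totalDeriv_mem_totalDerivImage {q : DiffPoly N} (hq : q ∈ xPolys x) :
    totalDeriv x q ∈ totalDerivImage x :=
  mem_totalDerivImage_iff.2 ⟨q, hq, rfl⟩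

theorem add_nsmul_notMem_vars {f : DiffPoly N} (I : Fin N → ℕ) {α : ℕ} (hα : xOrder x f < α) :
    I + α • Pi.single x 1 ∉ f.vars := fun hmem => by
  have := Finset.le_sup (f := fun J : Fin N → ℕ => J x) hmem
  simp only [Pi.add_apply, Pi.smul_apply, Pi.single_eq_same, smul_eq_mul, mul_one] at this
  exact lt_irrefl _ (hα.trans_le (le_add_self.trans this))

theorem varDeriv_eq_sum (I : Fin N → ℕ) {f : DiffPoly N} {n : ℕ} (hn : xOrder x f < n) :
    varDeriv x I f = ∑ α ∈ Finset.range n,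
      (-1 : ℝ) ^ α • (fun p => totalDeriv x p)^[α] (pderiv (I + α • Pi.single x 1) f) := by
  refine finsum_eq_sum_of_support_subset _ fun α hα => ?_
  by_contra hα'
  refine hα ?_
  beta_reduce
  rw [pderiv_eq_zero_of_notMem_vars (add_nsmul_notMem_vars I (by simp at hα'; omega))]
  simp [Function.iterate_fixed (map_zero (totalDeriv x))]

variable (x) in
/-- The evolutionary derivation `∂_c` with characteristic `c`, `v_{x^α} ↦ D_x^α c`; its values
on the other variables play no role. -/
def evolDeriv (c : DiffPoly N) : Derivation ℝ (DiffPoly N) (DiffPoly N) :=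
  mkDerivation ℝ fun I => (fun p => totalDeriv x p)^[I x] c

theorem evolDeriv_X (c : DiffPoly N) (α : ℕ) :
    evolDeriv x c (X (α • Pi.single x 1)) = (fun p => totalDeriv x p)^[α] c := by
  simp [evolDeriv, mkDerivation_X]

theorem evolDeriv_eq_sum (c : DiffPoly N) {h : DiffPoly N} (hh : h ∈ xPolys x) {n : ℕ}
    (hn : xOrder x h < n) :
    evolDeriv x c h = ∑ α ∈ Finset.range n,
      pderiv (α • Pi.single x 1) h * (fun p => totalDeriv x p)^[α] c := by
  classical
  have hvars : h.vars ⊆ (Finset.range n).image fun α => α • Pi.single x 1 := by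
    intro J hJ
    obtain ⟨α, rfl⟩ := mem_supported.1 hh hJ
    refine Finset.mem_image_of_mem _ (Finset.mem_range.2 ?_)
    by_contra hα
    exact add_nsmul_notMem_vars (x := x) 0 (show xOrder x h < α by omega) (by simpa using hJ)
  rw [derivation_eq_sum_pderiv_mul _ hvars, Finset.sum_image]
  · simp only [evolDeriv_X]
  · intro α _ β _ hαβ
    simpa using congr_fun hαβ x

theorem mul_iterate_sub_mem_totalDerivImage (α : ℕ) {f c : DiffPoly N} (hf : f ∈ xPolys x)
    (hc : c ∈ xPolys x) :
    f * (fun p => totalDeriv x p)^[α] c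
      - (-1 : ℝ) ^ α • ((fun p => totalDeriv x p)^[α] f * c) ∈ totalDerivImage x := by
  induction α generalizing f with
  | zero => simp
  | succ α ih =>
    have hleib : f * (fun p => totalDeriv x p)^[α + 1] c
        = totalDeriv x (f * (fun p => totalDeriv x p)^[α] c)
          - totalDeriv x f * (fun p => totalDeriv x p)^[α] c := by
      rw [Function.iterate_succ_apply', Derivation.leibniz, smul_eq_mul, smul_eq_mul]
      ring
    have key := sub_mem (totalDeriv_mem_totalDerivImage
      (mul_mem hf (iterate_totalDeriv_mem_xPolys α hc))) (ih (totalDeriv_mem_xPolys hf))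
    convert key using 1
    rw [hleib, pow_succ, mul_smul, Function.iterate_succ_apply]
    simp only [neg_smul, one_smul, smul_neg]
    abel

theorem varDeriv_zero_eq_neg_totalDeriv_gOf {h : DiffPoly N} (h0 : 0 ∉ h.vars) :
    varDeriv x 0 h = -totalDeriv x (gOf x h) := by
  set n := xOrder x h + 1
  rw [varDeriv_eq_sum 0 (show xOrder x h < n + 1 by omega), Finset.sum_range_succ',
    gOf, varDeriv_eq_sum _ (show xOrder x h < n by omega), map_sum, ← Finset.sum_neg_distrib]
  simp only [zero_add, zero_smul, pderiv_eq_zero_of_notMem_vars h0, Function.iterate_zero_apply,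
    smul_zero, add_zero, Derivation.map_smul, pow_succ, mul_neg_one, neg_smul, succ_nsmul',
    Function.iterate_succ_apply']

theorem evolDeriv_add_mul_mem_totalDerivImage {c h : DiffPoly N} (hc : c ∈ xPolys x)
    (hh : h ∈ supported ℝ (xVars x \ {0})) :
    evolDeriv x c h + c * totalDeriv x (gOf x h) ∈ totalDerivImage x := by
  have hh' : h ∈ xPolys x := supported_mono Set.sdiff_subset hh
  have h0 : (0 : Fin N → ℕ) ∉ h.vars := fun h0 => (mem_supported.1 hh h0).2 rfl
  rw [← sub_neg_eq_add, ← mul_neg, ← varDeriv_zero_eq_neg_totalDeriv_gOf h0, mul_comm c,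
    evolDeriv_eq_sum c hh' (Nat.lt_succ_self _), varDeriv_eq_sum 0 (Nat.lt_succ_self _),
    Finset.sum_mul, ← Finset.sum_sub_distrib]
  refine Submodule.sum_mem _ fun α _ => ?_
  simpa [smul_mul_assoc] using
    mul_iterate_sub_mem_totalDerivImage α (pderiv_mem_supported _ hh') hc

end XPolynomials

section Substitution

variable {N : ℕ} {x i j : Fin N} {gi gj s : DiffPoly N}

variable (x i j) in
/-- The substitution `σ`, with `s` the value of `v_{t_i t_j}`. -/
def evolSubst (gi gj s : DiffPoly N) : DiffPoly N →ₐ[ℝ] DiffPoly N :=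
  aeval (substVal x i j (fun α => (fun p => totalDeriv x p)^[α] gi)
    (fun α => (fun p => totalDeriv x p)^[α] gj) (fun α => (fun p => totalDeriv x p)^[α] s))

variable (x i j) in
/-- Generators of the ring `𝓢`. -/
def sGens : Set (DiffPoly N) :=
  {p : DiffPoly N | ∃ α : ℕ,
    p = X (α • Pi.single x 1) ∨
    p = X (α • Pi.single x 1 + Pi.single i 1) ∨
    p = X (α • Pi.single x 1 + Pi.single j 1) ∨
    p = X (α • Pi.single x 1 + Pi.single i 1 + Pi.single j 1)}

theorem evolSubst_comm : evolSubst x i j gi gj s = evolSubst x j i gj gi s := by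
  unfold evolSubst
  congr 1
  ext1 I
  simp only [substVal]
  grind

theorem evolSubst_X (hix : i ≠ x) (hjx : j ≠ x) (α : ℕ) :
    evolSubst x i j gi gj s (X (α • Pi.single x 1)) = X (α • Pi.single x 1) := by
  simp [evolSubst, substVal, Pi.single_apply, hix, hjx, hix.symm, hjx.symm]

theorem evolSubst_X_add_single_left (hix : i ≠ x) (hjx : j ≠ x) (hij : i ≠ j) (α : ℕ) :
    evolSubst x i j gi gj s (X (α • Pi.single x 1 + Pi.single i 1))
      = (fun p => totalDeriv x p)^[α] gi := by
  simp [evolSubst, substVal, Pi.single_apply, hix, hix.symm, hjx.symm, hij.symm]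
  grind

theorem evolSubst_X_add_single_right (hix : i ≠ x) (hjx : j ≠ x) (hij : i ≠ j) (α : ℕ) :
    evolSubst x i j gi gj s (X (α • Pi.single x 1 + Pi.single j 1))
      = (fun p => totalDeriv x p)^[α] gj := by
  rw [evolSubst_comm, evolSubst_X_add_single_left hjx hix hij.symm]

theorem evolSubst_X_add_single_add_single (hix : i ≠ x) (hjx : j ≠ x) (hij : i ≠ j) (α : ℕ) :
    evolSubst x i j gi gj s (X (α • Pi.single x 1 + Pi.single i 1 + Pi.single j 1))
      = (fun p => totalDeriv x p)^[α] s := by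
  simp [evolSubst, substVal, Pi.single_apply, hix, hjx, hix.symm, hjx.symm, hij, hij.symm]
  grind

theorem evolSubst_eq_self (hix : i ≠ x) (hjx : j ≠ x) {p : DiffPoly N} (hp : p ∈ xPolys x) :
    evolSubst x i j gi gj s p = p :=
  (AlgHom.eqOn_adjoin_iff (ψ := AlgHom.id ℝ _)).2
    (by rintro _ ⟨_, ⟨α, rfl⟩, rfl⟩; exact evolSubst_X hix hjx α) hp

theorem evolSubst_mem_xPolys (hix : i ≠ x) (hjx : j ≠ x) (hij : i ≠ j) (hgi : gi ∈ xPolys x)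
    (hgj : gj ∈ xPolys x) (hs : s ∈ xPolys x) {p : DiffPoly N}
    (hp : p ∈ Algebra.adjoin ℝ (sGens x i j)) : evolSubst x i j gi gj s p ∈ xPolys x := by
  refine Algebra.adjoin_le (S := (xPolys x).comap (evolSubst x i j gi gj s)) ?_ hp
  rintro _ ⟨α, rfl | rfl | rfl | rfl⟩ <;> rw [SetLike.mem_coe, Subalgebra.mem_comap]
  · exact (evolSubst_X hix hjx α).symm ▸ X_mem_xPolys α
  · exact (evolSubst_X_add_single_left hix hjx hij α).symm ▸ iterate_totalDeriv_mem_xPolys α hgi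
  · exact (evolSubst_X_add_single_right hix hjx hij α).symm ▸ iterate_totalDeriv_mem_xPolys α hgj
  · exact (evolSubst_X_add_single_add_single hix hjx hij α).symm ▸
      iterate_totalDeriv_mem_xPolys α hs

theorem evolSubst_totalDeriv (hix : i ≠ x) (hjx : j ≠ x) (hij : i ≠ j) {p : DiffPoly N}
    (hp : p ∈ Algebra.adjoin ℝ (sGens x i j)) :
    evolSubst x i j gi gj s (totalDeriv x p) = totalDeriv x (evolSubst x i j gi gj s p) := by
  refine (evolSubst x i j gi gj s).map_derivation_of_forall_mem_adjoin _ _ ?_ hp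
  have shift (I : Fin N → ℕ) (α : ℕ) : α • Pi.single x 1 + I + Pi.single x 1
      = (α + 1) • Pi.single x 1 + I := by
    rw [succ_nsmul]; abel
  rintro _ ⟨α, rfl | rfl | rfl | rfl⟩ <;> rw [totalDeriv_X]
  · rw [← succ_nsmul, evolSubst_X hix hjx, evolSubst_X hix hjx, totalDeriv_X, succ_nsmul]
  · rw [shift, evolSubst_X_add_single_left hix hjx hij, evolSubst_X_add_single_left hix hjx hij,
      Function.iterate_succ_apply']
  · rw [shift, evolSubst_X_add_single_right hix hjx hij, evolSubst_X_add_single_right hix hjx hij,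
      Function.iterate_succ_apply']
  · rw [add_assoc _ (Pi.single i 1), shift, ← add_assoc, ← add_assoc,
      evolSubst_X_add_single_add_single hix hjx hij,
      evolSubst_X_add_single_add_single hix hjx hij, Function.iterate_succ_apply']

theorem evolSubst_totalDeriv_eq_evolDeriv (hix : i ≠ x) (hjx : j ≠ x) (hij : i ≠ j)
    {p : DiffPoly N} (hp : p ∈ xPolys x) :
    evolSubst x i j gi gj s (totalDeriv j p) = evolDeriv x gj p := by
  conv_rhs => rw [← evolSubst_eq_self (gi := gi) (gj := gj) (s := s) hix hjx hp]
  refine (evolSubst x i j gi gj s).map_derivation_of_forall_mem_adjoin _ _ ?_ hp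
  rintro _ ⟨_, ⟨α, rfl⟩, rfl⟩
  rw [totalDeriv_X, evolSubst_X_add_single_right hix hjx hij, evolSubst_X hix hjx, evolDeriv_X]

theorem evolSubst_totalDeriv_lagrangian (hix : i ≠ x) (hjx : j ≠ x) (hij : i ≠ j)
    {h : DiffPoly N} (hh : h ∈ xPolys x) :
    evolSubst x i j gi gj s
        (totalDeriv j ((1 / 2 : ℝ) • (X (Pi.single x 1) * X (Pi.single i 1)) - h))
      = (1 / 2 : ℝ) • (X (Pi.single x 1) * s + gi * totalDeriv x gj) - evolDeriv x gj h := by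
  have hXx := evolSubst_X (gi := gi) (gj := gj) (s := s) hix hjx 1
  have hXi := evolSubst_X_add_single_left (gi := gi) (gj := gj) (s := s) hix hjx hij 0
  have hXij := evolSubst_X_add_single_add_single (gi := gi) (gj := gj) (s := s) hix hjx hij 0
  have hXxj := evolSubst_X_add_single_right (gi := gi) (gj := gj) (s := s) hix hjx hij 1
  simp only [one_smul, zero_smul, zero_add, Function.iterate_zero_apply,
    Function.iterate_one] at hXx hXi hXij hXxj
  rw [map_sub, Derivation.map_smul, Derivation.leibniz, totalDeriv_X, totalDeriv_X, map_sub,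
    map_smul, map_add, smul_eq_mul, smul_eq_mul, map_mul, map_mul, hXx, hXi, hXij, hXxj,
    evolSubst_totalDeriv_eq_evolDeriv hix hjx hij hh]

theorem evolSubst_lagrangian_two_form (hix : i ≠ x) (hjx : j ≠ x) (hij : i ≠ j)
    {Hi Hj L : DiffPoly N} (hHi : Hi ∈ xPolys x) (hHj : Hj ∈ xPolys x)
    (hL : L ∈ Algebra.adjoin ℝ (sGens x i j)) :
    evolSubst x i j gi gj s
        (totalDeriv j ((1 / 2 : ℝ) • (X (Pi.single x 1) * X (Pi.single i 1)) - Hi)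
          - totalDeriv i ((1 / 2 : ℝ) • (X (Pi.single x 1) * X (Pi.single j 1)) - Hj)
          + totalDeriv x L)
      = (1 / 2 : ℝ) • (gi * totalDeriv x gj - gj * totalDeriv x gi) - evolDeriv x gj Hi
          + evolDeriv x gi Hj + totalDeriv x (evolSubst x i j gi gj s L) := by
  have hLj := evolSubst_totalDeriv_lagrangian (gi := gj) (gj := gi) (s := s) hjx hix hij.symm hHj
  rw [← evolSubst_comm] at hLj
  rw [map_add, map_sub, evolSubst_totalDeriv_lagrangian hix hjx hij hHi, hLj,
    evolSubst_totalDeriv hix hjx hij hL]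
  module

end Substitution

/-- if the Lagrangian two-form is closed on solutions, i.e. there is
`L_{ij} ∈ 𝓢` with `σ(D_j(L_{1i}) − D_i(L_{1j}) + D_x(L_{ij})) = 0`, then the Hamiltonians
are in involution: `{∫h_i, ∫h_j} = 0`, i.e. `D_x(δh_i/δv_x)·(δh_j/δv_x)` lies in the image
of `D_x` on `ℝ[v_{x^α}]`. -/
theorem stmt_17 (N : ℕ) (x : Fin N)
    (i j : Fin N) (hi : i ≠ x) (hj : j ≠ x) (hij : i ≠ j)
    (Hi Hj : DiffPoly N)
    (hdepi : Hi ∈ Algebra.adjoin ℝ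
      {p : DiffPoly N | ∃ α : ℕ, 1 ≤ α ∧ p = X (α • Pi.single x 1)})
    (hdepj : Hj ∈ Algebra.adjoin ℝ
      {p : DiffPoly N | ∃ α : ℕ, 1 ≤ α ∧ p = X (α • Pi.single x 1)})
    (hclosed : ∃ Lij ∈ Algebra.adjoin ℝ
        {p : DiffPoly N | ∃ α : ℕ,
          p = X (α • Pi.single x 1) ∨
          p = X (α • Pi.single x 1 + Pi.single i 1) ∨
          p = X (α • Pi.single x 1 + Pi.single j 1) ∨
          p = X (α • Pi.single x 1 + Pi.single i 1 + Pi.single j 1)},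
      aeval (substVal x i j
          (fun α => (fun p => totalDeriv x p)^[α] (gOf x Hi))
          (fun α => (fun p => totalDeriv x p)^[α] (gOf x Hj))
          (fun α => (fun p => totalDeriv x p)^[α]
            (∑ᶠ β : ℕ, pderiv ((β + 1) • Pi.single x 1) (gOf x Hi) *
              (fun p => totalDeriv x p)^[β + 1] (gOf x Hj))))
        (totalDeriv j ((1 / 2 : ℝ) • (X (Pi.single x 1) * X (Pi.single i 1)) - Hi)
          - totalDeriv i ((1 / 2 : ℝ) • (X (Pi.single x 1) * X (Pi.single j 1)) - Hj)
          + totalDeriv x Lij) = 0) :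
    ∃ p ∈ Algebra.adjoin ℝ {q : DiffPoly N | ∃ α : ℕ, q = X (α • Pi.single x 1)},
      totalDeriv x p = totalDeriv x (gOf x Hi) * gOf x Hj := by
  obtain ⟨Lij, hL, hclosed⟩ := hclosed
  rw [adjoin_X_xVars_pos] at hdepi hdepj
  rw [adjoin_X_xVars, ← mem_totalDerivImage_iff, mul_comm]
  set gi := gOf x Hi
  set gj := gOf x Hj
  set s := ∑ᶠ β : ℕ, pderiv ((β + 1) • Pi.single x 1) gi * (fun p => totalDeriv x p)^[β + 1] gj
  have hHi := supported_mono Set.sdiff_subset hdepi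
  have hHj := supported_mono Set.sdiff_subset hdepj
  have hgi : gi ∈ xPolys x := varDeriv_mem_xPolys _ hHi
  have hgj : gj ∈ xPolys x := varDeriv_mem_xPolys _ hHj
  have hs : s ∈ xPolys x := finsum_induction _ (zero_mem _) (fun _ _ => add_mem) fun β =>
    mul_mem (pderiv_mem_supported _ hgi) (iterate_totalDeriv_mem_xPolys _ hgj)
  change evolSubst x i j gi gj s _ = 0 at hclosed
  rw [evolSubst_lagrangian_two_form hi hj hij hHi hHj hL] at hclosed
  have key : gj * totalDeriv x gi = (evolDeriv x gj Hi + gj * totalDeriv x gi)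
      - (evolDeriv x gi Hj + gi * totalDeriv x gj) + (1 / 2 : ℝ) • totalDeriv x (gi * gj)
      - totalDeriv x (evolSubst x i j gi gj s Lij) := by
    rw [Derivation.leibniz, smul_eq_mul, smul_eq_mul]
    linear_combination (norm := module) hclosed
  rw [key]
  refine sub_mem (add_mem (sub_mem ?_ ?_) (Submodule.smul_mem _ _ ?_)) ?_
  · exact evolDeriv_add_mul_mem_totalDerivImage hgj hdepi
  · exact evolDeriv_add_mul_mem_totalDerivImage hgi hdepj
  · exact totalDeriv_mem_totalDerivImage (mul_mem hgi hgj)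
  · exact totalDeriv_mem_totalDerivImage (evolSubst_mem_xPolys hi hj hij hgi hgj hs hL)
end
end
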